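/- arXiv:math-ph/0511044 — 5 statements merged into one kernel-verified Lean document; each statement's English description precedes it below -/
import Mathlib

section
/- For real numbers a, b, c, d: (ca + db)² + (cb + da)² ≤ 2(c²+d²)(a²+b²). Consequently, for the hyperbolic inner product on 𝔾ⁿ defined by (x,y) = Σ x̄ᵢyᵢ, one has ‖(x,y)‖ ≤ √2 ‖x‖ ‖y‖ for all x, y ∈ 𝔾ⁿ. -/
/-!
Both coordinates of `(x, y)` are real inner products of vectors of length `‖x‖` and `‖y‖` in
`ℝ²ⁿ` (the first pairs `(Re x, -Im x)` with `(Re y, Im y)`, the second with `(Im y, Re y)`), so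
Cauchy–Schwarz bounds each squared coordinate by `‖x‖² ‖y‖²`; adding the two gives the factor `2`.
The scalar inequality is the case `n = 1`.
-/

/-- Multiplication of hyperbolic (split-complex) numbers. -/
def gmul (z w : ℝ × ℝ) : ℝ × ℝ := (z.1 * w.1 + z.2 * w.2, z.1 * w.2 + z.2 * w.1)

/-- Hyperbolic conjugation. -/
def gconj (z : ℝ × ℝ) : ℝ × ℝ := (z.1, -z.2)

/-- Euclidean norm on the hyperbolic numbers. -/
noncomputable def gnorm (z : ℝ × ℝ) : ℝ := Real.sqrt (z.1 ^ 2 + z.2 ^ 2)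

/-- Hyperbolic inner product on `𝔾ⁿ`: `(x, y) = ∑ x̄ᵢ yᵢ`. -/
def gip {n : ℕ} (x y : Fin n → ℝ × ℝ) : ℝ × ℝ := ∑ i, gmul (gconj (x i)) (y i)

/-- Euclidean norm on `𝔾ⁿ`. -/
noncomputable def gnormVec {n : ℕ} (x : Fin n → ℝ × ℝ) : ℝ :=
  Real.sqrt (∑ i, ((x i).1 ^ 2 + (x i).2 ^ 2))

section PairedCauchySchwarz

variable {ι R : Type*} [Fintype ι] [CommRing R] [LinearOrder R] [IsStrictOrderedRing R]

/-- Cauchy–Schwarz on `ι × Bool`, i.e. for the vectors `(f, h)` and `(g, k)`. -/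
theorem sum_mul_add_mul_sq_le (f g h k : ι → R) :
    (∑ i, (f i * g i + h i * k i)) ^ 2 ≤
      (∑ i, (f i ^ 2 + h i ^ 2)) * ∑ i, (g i ^ 2 + k i ^ 2) := by
  simpa [Fintype.sum_prod_type, Finset.sum_add_distrib, add_comm] using
    Finset.sum_mul_sq_le_sq_mul_sq (Finset.univ : Finset (ι × Bool))
      (fun p => if p.2 then f p.1 else h p.1) (fun p => if p.2 then g p.1 else k p.1)

theorem sq_sum_mul_add_mul_add_sq_sum_mul_add_mul_le (f g h k : ι → R) :
    (∑ i, (f i * g i + h i * k i)) ^ 2 + (∑ i, (f i * k i + h i * g i)) ^ 2 ≤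
      2 * (∑ i, (f i ^ 2 + h i ^ 2)) * ∑ i, (g i ^ 2 + k i ^ 2) := by
  have hfst := sum_mul_add_mul_sq_le f g h k
  have hsnd := sum_mul_add_mul_sq_le f k h g
  simp only [add_comm (k _ ^ 2)] at hsnd
  linarith

end PairedCauchySchwarz

theorem gip_fst {n : ℕ} (x y : Fin n → ℝ × ℝ) :
    (gip x y).1 = ∑ i, ((x i).1 * (y i).1 + -(x i).2 * (y i).2) := by
  simp [gip, gmul, gconj, Prod.fst_sum]

theorem gip_snd {n : ℕ} (x y : Fin n → ℝ × ℝ) :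
    (gip x y).2 = ∑ i, ((x i).1 * (y i).2 + -(x i).2 * (y i).1) := by
  simp [gip, gmul, gconj, Prod.snd_sum]

theorem gip_fst_sq_add_snd_sq_le {n : ℕ} (x y : Fin n → ℝ × ℝ) :
    (gip x y).1 ^ 2 + (gip x y).2 ^ 2 ≤
      2 * (∑ i, ((x i).1 ^ 2 + (x i).2 ^ 2)) * ∑ i, ((y i).1 ^ 2 + (y i).2 ^ 2) := by
  simpa [gip_fst, gip_snd] using sq_sum_mul_add_mul_add_sq_sum_mul_add_mul_le
    (fun i => (x i).1) (fun i => (y i).1) (fun i => -(x i).2) (fun i => (y i).2)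

theorem gip_norm_bound :
    (∀ a b c d : ℝ, (c * a + d * b) ^ 2 + (c * b + d * a) ^ 2 ≤
        2 * (c ^ 2 + d ^ 2) * (a ^ 2 + b ^ 2)) ∧
    (∀ (n : ℕ) (x y : Fin n → ℝ × ℝ),
        gnorm (gip x y) ≤ Real.sqrt 2 * gnormVec x * gnormVec y) := by
  refine ⟨fun a b c d => ?_, fun n x y => ?_⟩
  · simpa using sq_sum_mul_add_mul_add_sq_sum_mul_add_mul_le
      (fun _ : Unit => c) (fun _ => a) (fun _ => d) (fun _ => b)
  · calc gnorm (gip x y)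
        ≤ √(2 * (∑ i, ((x i).1 ^ 2 + (x i).2 ^ 2)) * ∑ i, ((y i).1 ^ 2 + (y i).2 ^ 2)) :=
          Real.sqrt_le_sqrt (gip_fst_sq_add_snd_sq_le x y)
      _ = √2 * gnormVec x * gnormVec y := by
          rw [gnormVec, gnormVec, Real.sqrt_mul (by positivity), Real.sqrt_mul zero_le_two]
end

section
/- The family fα(x) := ∫₋α^α exp(j p x) dp = 2 sinh(αx)/x does not converge to the Dirac delta as α → ∞ in the distributional sense: for the test function φ(x) = exp(−x²), the integrals ∫ fα(x)φ(x) dx do not converge to φ(0) = 1 as α → ∞. -/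
open MeasureTheory Filter

lemma integral_cosh' (a b : ℝ) : ∫ x in a..b, Real.cosh x = Real.sinh b - Real.sinh a :=
  intervalIntegral.integral_eq_sub_of_hasDerivAt (fun x _ => Real.hasDerivAt_sinh x)
    (Real.continuous_cosh.intervalIntegrable a b)

lemma integral_sinh' (a b : ℝ) : ∫ x in a..b, Real.sinh x = Real.cosh b - Real.cosh a :=
  intervalIntegral.integral_eq_sub_of_hasDerivAt (fun x _ => Real.hasDerivAt_cosh x)
    (Real.continuous_sinh.intervalIntegrable a b)

lemma fA_fst (α x : ℝ) (hx : x ≠ 0) :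
    (∫ p in (-α)..α, Real.cosh (p * x)) = 2 * Real.sinh (α * x) / x := by
  rw [intervalIntegral.integral_comp_mul_right Real.cosh hx, integral_cosh', neg_mul,
    Real.sinh_neg, smul_eq_mul]
  field_simp
  ring

lemma fA_snd (α x : ℝ) : (∫ p in (-α)..α, Real.sinh (p * x)) = 0 := by
  rcases eq_or_ne x 0 with rfl | hx
  · simp
  · rw [intervalIntegral.integral_comp_mul_right Real.sinh hx, integral_sinh', neg_mul,
      Real.cosh_neg]
    simp

lemma integrable_gauss_exp (c : ℝ) : Integrable (fun x : ℝ => Real.exp (-x ^ 2 + c * x)) := by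
  have h : (fun x : ℝ => Real.exp (-x ^ 2 + c * x)) =
      fun x => Real.exp (c ^ 2 / 4) * Real.exp (-(1 : ℝ) * (x - c / 2) ^ 2) := by
    funext x
    rw [← Real.exp_add]
    congr 1
    ring
  rw [h]
  exact ((integrable_exp_neg_mul_sq one_pos).comp_sub_right (c / 2)).const_mul _

lemma integrable_gauss_cosh (c : ℝ) :
    Integrable (fun x : ℝ => Real.exp (-x ^ 2) * Real.cosh (c * x)) := by
  refine (((integrable_gauss_exp c).add (integrable_gauss_exp (-c))).div_const 2).congr
    (Filter.Eventually.of_forall fun x => ?_)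
  simp only [Pi.add_apply]
  rw [Real.exp_add, Real.exp_add, Real.cosh_eq]
  ring_nf

lemma sinh_tendsto : Tendsto Real.sinh atTop atTop := by
  have h : Tendsto (fun x : ℝ => (Real.exp x + -1) / 2) atTop atTop :=
    (tendsto_atTop_add_const_right atTop (-1) Real.tendsto_exp_atTop).atTop_div_const
      (by norm_num)
  refine tendsto_atTop_mono' atTop ?_ h
  filter_upwards [eventually_ge_atTop (0 : ℝ)] with x hx
  rw [Real.sinh_eq]
  have h1 : Real.exp (-x) ≤ 1 := Real.exp_le_one_iff.2 (by linarith)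
  linarith

/-- The 𝔾-valued function `f_α(x) = ∫_{-α}^{α} exp(j p x) dp`, where
`exp(j p x) = cosh(p x) + j sinh(p x)` as a split-complex number `(cosh, sinh)`. -/
noncomputable def fAlpha (α x : ℝ) : ℝ × ℝ :=
  (∫ p in (-α)..α, Real.cosh (p * x), ∫ p in (-α)..α, Real.sinh (p * x))

lemma fA_int {α : ℝ} (hα : 0 ≤ α) :
    Integrable (fun x : ℝ => Real.exp (-x ^ 2) • fAlpha α x) := by
  have hmeas : AEStronglyMeasurable (fun x : ℝ => Real.exp (-x ^ 2) • fAlpha α x)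
      (volume : Measure ℝ) := by
    have hm' : Measurable fun x : ℝ => 2 * Real.sinh (α * x) / x :=
      ((Real.continuous_sinh.measurable.comp (measurable_const_mul α)).const_mul 2).div
        measurable_id
    have hm : Measurable (fun x : ℝ =>
        Real.exp (-x ^ 2) • ((2 * Real.sinh (α * x) / x, 0) : ℝ × ℝ)) :=
      (Real.continuous_exp.measurable.comp ((measurable_id.pow_const 2).neg)).smul
        (hm'.prodMk measurable_const)
    have h0 : ∀ᵐ x : ℝ, x ≠ 0 := by
      rw [ae_iff]
      have hset0 : {x : ℝ | ¬ x ≠ 0} = {0} := by ext x; simp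
      rw [hset0]
      exact measure_singleton 0
    refine hm.aestronglyMeasurable.congr ?_
    filter_upwards [h0] with x hx
    simp only [fAlpha, fA_fst α x hx, fA_snd]
  refine Integrable.mono' ((integrable_gauss_cosh α).const_mul (2 * α)) hmeas
    (Filter.Eventually.of_forall fun x => ?_)
  have h1 : ‖(∫ p in (-α)..α, Real.cosh (p * x))‖ ≤ Real.cosh (α * x) * |α - (-α)| := by
    refine intervalIntegral.norm_integral_le_of_norm_le_const fun p hp => ?_
    rw [Set.uIoc_of_le (by linarith : -α ≤ α)] at hp
    have hpα : |p| ≤ α := abs_le.2 ⟨hp.1.le, hp.2⟩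
    rw [Real.norm_eq_abs, abs_of_pos (Real.cosh_pos _), Real.cosh_le_cosh, abs_mul, abs_mul,
      abs_of_nonneg hα]
    exact mul_le_mul_of_nonneg_right hpα (abs_nonneg x)
  have habs : |α - (-α)| = 2 * α := by rw [abs_of_nonneg (by linarith)]; ring
  rw [habs] at h1
  rw [norm_smul, Real.norm_eq_abs, Real.abs_exp]
  have h2 : ‖fAlpha α x‖ ≤ Real.cosh (α * x) * (2 * α) := by
    rw [show fAlpha α x = (∫ p in (-α)..α, Real.cosh (p * x), (0 : ℝ)) by
      simp only [fAlpha, fA_snd], Prod.norm_def]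
    simp only [norm_zero]
    exact max_le h1 (by positivity)
  calc Real.exp (-x ^ 2) * ‖fAlpha α x‖
      ≤ Real.exp (-x ^ 2) * (Real.cosh (α * x) * (2 * α)) :=
        mul_le_mul_of_nonneg_left h2 (Real.exp_pos _).le
    _ = 2 * α * (Real.exp (-x ^ 2) * Real.cosh (α * x)) := by ring

theorem fAlpha_not_delta :
    (∀ α x : ℝ, x ≠ 0 → fAlpha α x = (2 * Real.sinh (α * x) / x, 0)) ∧
    ¬ Tendsto (fun α : ℝ => ∫ x : ℝ, Real.exp (-x ^ 2) • fAlpha α x)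
        atTop (nhds ((1 : ℝ), (0 : ℝ))) := by
  constructor
  · intro α x hx
    simp only [fAlpha, fA_fst α x hx, fA_snd]
  · intro htend
    have hF1 : Tendsto (fun α : ℝ => (∫ x : ℝ, Real.exp (-x ^ 2) • fAlpha α x).1)
        atTop (nhds 1) := (continuous_fst.tendsto _).comp htend
    have h2 := hF1.eventually_lt_const (by norm_num : (1 : ℝ) < 2)
    have h3 : ∀ᶠ α : ℝ in atTop, 2 ≤ Real.exp (-4) * Real.sinh α :=
      (sinh_tendsto.const_mul_atTop (Real.exp_pos (-4))).eventually_ge_atTop 2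
    obtain ⟨α, hα1, hα2, hα3⟩ := ((eventually_ge_atTop (1 : ℝ)).and (h2.and h3)).exists
    have hα0 : (0 : ℝ) ≤ α := by linarith
    have hint := fA_int hα0
    set g : ℝ → ℝ := fun x => Real.exp (-x ^ 2) * (fAlpha α x).1 with hg
    have hfst : (∫ x : ℝ, Real.exp (-x ^ 2) • fAlpha α x).1 = ∫ x : ℝ, g x := by
      have h := (ContinuousLinearMap.fst ℝ ℝ ℝ).integral_comp_comm hint
      simp only [ContinuousLinearMap.coe_fst', Prod.smul_fst, smul_eq_mul] at h
      exact h.symm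
    have hg_int : Integrable g := by
      have h := (ContinuousLinearMap.fst ℝ ℝ ℝ).integrable_comp hint
      simpa only [ContinuousLinearMap.coe_fst', Function.comp, Prod.smul_fst,
        smul_eq_mul] using h
    have hg_nonneg : ∀ x, 0 ≤ g x := fun x =>
      mul_nonneg (Real.exp_pos _).le
        (intervalIntegral.integral_nonneg (by linarith) fun u _ => (Real.cosh_pos _).le)
    have hlow : ∀ x ∈ Set.Icc (1 : ℝ) 2, Real.exp (-4) * Real.sinh α ≤ g x := by
      rintro x ⟨hx1, hx2⟩
      have hx0 : (0 : ℝ) < x := by linarith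
      have hgx : g x = Real.exp (-x ^ 2) * (2 * Real.sinh (α * x) / x) := by
        simp only [hg, fAlpha, fA_fst α x hx0.ne']
      have he : Real.exp (-4) ≤ Real.exp (-x ^ 2) := Real.exp_le_exp.2 (by nlinarith)
      have h0 : 0 ≤ Real.sinh α := Real.sinh_nonneg_iff.2 (by linarith)
      have hs : Real.sinh α ≤ 2 * Real.sinh (α * x) / x := by
        rw [le_div_iff₀ hx0]
        have h1 : Real.sinh α ≤ Real.sinh (α * x) := Real.sinh_le_sinh.2 (by nlinarith)
        nlinarith
      rw [hgx]
      exact mul_le_mul he hs h0 (Real.exp_pos _).le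
    have hvol : (volume (Set.Icc (1 : ℝ) 2)).toReal = 1 := by
      rw [Real.volume_Icc]
      norm_num
    have hset : Real.exp (-4) * Real.sinh α * (volume (Set.Icc (1 : ℝ) 2)).toReal
        ≤ ∫ x in Set.Icc (1 : ℝ) 2, g x :=
      setIntegral_ge_of_const_le_real measurableSet_Icc
        (by simp [Real.volume_Icc]) hlow hg_int.integrableOn
    rw [hvol, mul_one] at hset
    have hle : ∫ x in Set.Icc (1 : ℝ) 2, g x ≤ ∫ x, g x :=
      setIntegral_le_integral hg_int (Filter.Eventually.of_forall hg_nonneg)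
    rw [hfst] at hα2
    linarith
end

section
/- There is no unitary operator U on L²(ℝ, 𝔾) (preserving the hyperbolic inner product (f,g) = ∫ f̄ g) that extends the hyperbolic Fourier transform F[f](p) = ∫ exp(−jpx) f(x) dx from its natural domain: equivalently, F maps some element of L²(ℝ,𝔾)∩Dom(F) to a function not in L²(ℝ,𝔾). (No hyperbolic Plancherel theorem.) -/
open MeasureTheory

/-- The hyperbolic Fourier transform of a 𝔾-valued function:
`F[f](p) = ∫ exp(−jpx) · f(x) dx`, with `exp(−jpx) = (cosh(px), −sinh(px))`. -/
noncomputable def hypFourier (f : ℝ → ℝ × ℝ) (p : ℝ) : ℝ × ℝ :=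
  ∫ x : ℝ, gmul (Real.cosh (p * x), -Real.sinh (p * x)) (f x)

/-- No hyperbolic Plancherel theorem: the hyperbolic Fourier transform maps some
square-integrable function in its domain to a function that is not square-integrable,
hence it does not extend to a unitary on `L²(ℝ, 𝔾)`. -/
theorem no_hyperbolic_plancherel :
    ∃ f : ℝ → ℝ × ℝ,
      Integrable (fun x => (f x).1 ^ 2 + (f x).2 ^ 2) ∧
      (∀ p : ℝ, Integrable (fun x => gmul (Real.cosh (p * x), -Real.sinh (p * x)) (f x))) ∧
      ¬ Integrable (fun p => (hypFourier f p).1 ^ 2 + (hypFourier f p).2 ^ 2) := by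
  classical
  set f : ℝ → ℝ × ℝ := (Set.Icc (0:ℝ) 1).indicator (fun _ => ((1:ℝ), (0:ℝ))) with hf
  set g : ℝ → ℝ → ℝ × ℝ := fun p x => (Real.cosh (p * x), -Real.sinh (p * x)) with hg
  have hgcont : ∀ p, Continuous (g p) := by
    intro p; exact (((Real.continuous_cosh).comp (continuous_const.mul continuous_id)).prodMk
      (((Real.continuous_sinh).comp (continuous_const.mul continuous_id)).neg))
  -- the integrand of the Fourier transform is an indicator
  have hkey : ∀ p, (fun x => gmul (Real.cosh (p * x), -Real.sinh (p * x)) (f x))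
      = (Set.Icc (0:ℝ) 1).indicator (g p) := by
    intro p
    funext x
    by_cases hx : x ∈ Set.Icc (0:ℝ) 1 <;>
      simp [hf, hg, gmul, Set.indicator_of_mem, Set.indicator_of_notMem, hx]
  have hIntp : ∀ p, Integrable (fun x => gmul (Real.cosh (p * x), -Real.sinh (p * x)) (f x)) := by
    intro p
    rw [hkey p, integrable_indicator_iff measurableSet_Icc]
    exact (hgcont p).integrableOn_Icc
  refine ⟨f, ?_, hIntp, ?_⟩
  · -- square integrability of f
    have : (fun x => (f x).1 ^ 2 + (f x).2 ^ 2)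
        = (Set.Icc (0:ℝ) 1).indicator (fun _ => (1:ℝ)) := by
      funext x
      by_cases hx : x ∈ Set.Icc (0:ℝ) 1 <;>
        simp [hf, Set.indicator_of_mem, Set.indicator_of_notMem, hx]
    rw [this, integrable_indicator_iff measurableSet_Icc]
    exact integrableOn_const (by simp [Real.volume_Icc])
  · -- F[f] has first component ≥ 1 everywhere
    have hF1 : ∀ p, 1 ≤ (hypFourier f p).1 := by
      intro p
      have hint : Integrable (fun x => gmul (Real.cosh (p * x), -Real.sinh (p * x)) (f x)) :=
        hIntp p
      have h1 : hypFourier f p = ∫ x in Set.Icc (0:ℝ) 1, g p x := by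
        rw [hypFourier, hkey p, integral_indicator measurableSet_Icc]
      have h2 : (hypFourier f p).1 = ∫ x in Set.Icc (0:ℝ) 1, Real.cosh (p * x) := by
        rw [h1]
        have hio : IntegrableOn (g p) (Set.Icc (0:ℝ) 1) := (hgcont p).integrableOn_Icc
        have := (ContinuousLinearMap.fst ℝ ℝ ℝ).integral_comp_comm hio
        simpa [hg] using this.symm
      rw [h2]
      have hc : IntegrableOn (fun x => Real.cosh (p * x)) (Set.Icc (0:ℝ) 1) :=
        (Real.continuous_cosh.comp (continuous_const.mul continuous_id)).integrableOn_Icc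
      have hmono : ∫ x in Set.Icc (0:ℝ) 1, (1:ℝ) ≤ ∫ x in Set.Icc (0:ℝ) 1, Real.cosh (p * x) :=
        setIntegral_mono_on (integrableOn_const (by simp [Real.volume_Icc])) hc
          measurableSet_Icc (fun x _ => Real.one_le_cosh _)
      calc (1:ℝ) = ∫ x in Set.Icc (0:ℝ) 1, (1:ℝ) := by
            simp [Real.volume_Icc]
        _ ≤ _ := hmono
    intro hInt
    have hone : Integrable (fun _ : ℝ => (1:ℝ)) := by
      refine hInt.mono' aestronglyMeasurable_const ?_
      filter_upwards with p
      have h1 := hF1 p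
      have : (1:ℝ) ≤ (hypFourier f p).1 ^ 2 := by nlinarith
      have h2 : (0:ℝ) ≤ (hypFourier f p).2 ^ 2 := sq_nonneg _
      rw [norm_one]
      linarith
    have := (integrable_const_iff.mp hone)
    simp at this
    exact measure_ne_top (μ := (volume : Measure ℝ)) (s := Set.univ) Real.volume_univ
end

section
/- For a self-adjoint matrix A = [[x₁₁, x₁₂+jy₁₂],[x₁₂−jy₁₂, x₂₂]] over 𝔾 with Δ := (x₁₁−x₂₂)² + 4x₁₂² − 4y₁₂² > 0, A has exactly four eigenvalues in 𝔾: (x₁₁+x₂₂ ± √Δ)/2 and (x₁₁+x₂₂ ± j√Δ)/2, and exactly two of them are real. -/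
/-- Determinant of a 2×2 matrix over the hyperbolic numbers. -/
def det2 (A : Matrix (Fin 2) (Fin 2) (ℝ × ℝ)) : ℝ × ℝ :=
  gmul (A 0 0) (A 1 1) - gmul (A 0 1) (A 1 0)

theorem gmul_self_eq_sq_iff (μ : ℝ × ℝ) (s : ℝ) :
    gmul μ μ = (s ^ 2, 0) ↔ μ = (s, 0) ∨ μ = (-s, 0) ∨ μ = (0, s) ∨ μ = (0, -s) := by
  obtain ⟨p, q⟩ := μ
  simp only [gmul, Prod.mk.injEq]
  constructor
  · rintro ⟨hsq, hpq⟩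
    rcases mul_eq_zero.mp (show p * q = 0 by linarith) with rfl | rfl
    · have hfactor : (q - s) * (q + s) = 0 := by linear_combination hsq
      rcases mul_eq_zero.mp hfactor with h | h
      · exact .inr <| .inr <| .inl ⟨rfl, by linarith⟩
      · exact .inr <| .inr <| .inr ⟨rfl, by linarith⟩
    · have hfactor : (p - s) * (p + s) = 0 := by linear_combination hsq
      rcases mul_eq_zero.mp hfactor with h | h
      · exact .inl ⟨by linarith, rfl⟩
      · exact .inr <| .inl ⟨by linarith, rfl⟩
  · rintro (⟨rfl, rfl⟩ | ⟨rfl, rfl⟩ | ⟨rfl, rfl⟩ | ⟨rfl, rfl⟩) <;> constructor <;> ring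

theorem det2_sub_eq_zero_iff (x11 x12 y12 x22 a b : ℝ) :
    det2 (fun i j => !![(x11, 0), (x12, y12); (x12, -y12), (x22, 0)] i j
        - if i = j then (a, b) else (0, 0)) = (0, 0) ↔
      gmul (2 * a - (x11 + x22), 2 * b) (2 * a - (x11 + x22), 2 * b)
        = ((x11 - x22) ^ 2 + 4 * x12 ^ 2 - 4 * y12 ^ 2, 0) := by
  simp only [det2, gmul, Matrix.of_apply, Matrix.cons_val', Matrix.cons_val_zero,
    Matrix.cons_val_one, Matrix.cons_val_fin_one, ↓reduceIte, zero_ne_one, one_ne_zero,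
    Prod.mk_sub_mk, sub_zero, zero_sub, Prod.ext_iff]
  constructor
  · rintro ⟨h1, h2⟩
    exact ⟨by linear_combination 4 * h1, by linear_combination 4 * h2⟩
  · rintro ⟨h1, h2⟩
    exact ⟨by linear_combination h1 / 4, by linear_combination h2 / 4⟩

/-- A self-adjoint hyperbolic 2×2 matrix with positive discriminant
`Δ = (x₁₁−x₂₂)² + 4x₁₂² − 4y₁₂²` has exactly four eigenvalues
`(x₁₁+x₂₂ ± √Δ)/2` and `(x₁₁+x₂₂ ± j√Δ)/2`, exactly two of which are real. -/
theorem selfadjoint_four_eigenvalues (x11 x12 y12 x22 : ℝ)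
    (hΔ : 0 < (x11 - x22) ^ 2 + 4 * x12 ^ 2 - 4 * y12 ^ 2) :
    let A : Matrix (Fin 2) (Fin 2) (ℝ × ℝ) :=
      !![(x11, 0), (x12, y12); (x12, -y12), (x22, 0)]
    let Δ : ℝ := (x11 - x22) ^ 2 + 4 * x12 ^ 2 - 4 * y12 ^ 2
    let t : ℝ := x11 + x22
    let l1 : ℝ × ℝ := ((t + Real.sqrt Δ) / 2, 0)
    let l2 : ℝ × ℝ := ((t - Real.sqrt Δ) / 2, 0)
    let l3 : ℝ × ℝ := (t / 2, Real.sqrt Δ / 2)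
    let l4 : ℝ × ℝ := (t / 2, -Real.sqrt Δ / 2)
    (∀ lam : ℝ × ℝ,
        det2 (fun i j => A i j - if i = j then lam else (0, 0)) = (0, 0) ↔
          lam = l1 ∨ lam = l2 ∨ lam = l3 ∨ lam = l4) ∧
    [l1, l2, l3, l4].Pairwise (· ≠ ·) ∧
    l1.2 = 0 ∧ l2.2 = 0 ∧ l3.2 ≠ 0 ∧ l4.2 ≠ 0 := by
  intro A Δ t l1 l2 l3 l4
  have hs : Real.sqrt Δ ^ 2 = Δ := Real.sq_sqrt hΔ.le
  have hs0 : 0 < Real.sqrt Δ := Real.sqrt_pos.mpr hΔ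
  refine ⟨fun ⟨a, b⟩ => ?_, ?_, rfl, rfl, by simp [l3, hs0.ne'], by simp [l4, hs0.ne']⟩
  · rw [det2_sub_eq_zero_iff]
    change _ = (Δ, 0) ↔ _
    rw [← hs, gmul_self_eq_sq_iff]
    simp only [l1, l2, l3, l4, t, Prod.mk.injEq]
    refine or_congr ?_ (or_congr ?_ (or_congr ?_ ?_)) <;>
      constructor <;> rintro ⟨h1, h2⟩ <;> constructor <;> linarith
  · simp [l1, l2, l3, l4, sub_eq_add_neg, CharZero.eq_neg_self_iff, hs0.ne']
end

section
/- The infinite matrices Q = diag(1,2,3,…) and P with entries P_{mn} = −i·c_{m−n}, where c_k = 1/k for k ≠ 0 (and P_{mm} = 0), satisfy, on the dense subspace D = {x ∈ l²(ℂ) : Σxₙ = 0, finitely many xₙ ≠ 0}, the relation (QP − PQ)x = i·x for all x ∈ D. -/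
/-- Matrix entries `a m n` with `a m n = 1/(m−n)` for `m > n`, `−1/(n−m)` for `n > m`,
and `0` on the diagonal (so `P = −i·a` is the matrix of the text). -/
noncomputable def aEnt (m n : ℕ) : ℂ :=
  if n < m then 1 / ((m : ℂ) - n) else if m < n then -(1 / ((n : ℂ) - m)) else 0

/-- The operator `P` with matrix entries `P_{mn} = −i · a_{m n}`. -/
noncomputable def Pop (x : ℕ → ℂ) (m : ℕ) : ℂ := ∑' n, (-Complex.I * aEnt m n) * x n

/-- The diagonal operator `Q = diag(1, 2, 3, …)`. -/
def Qop (x : ℕ → ℂ) (m : ℕ) : ℂ := ((m : ℂ) + 1) * x m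

lemma aEnt_key (m n : ℕ) : aEnt m n * ((m : ℂ) - n) = if n = m then 0 else 1 := by
  unfold aEnt
  rcases lt_trichotomy n m with h | h | h
  · have hne : (m : ℂ) - n ≠ 0 := sub_ne_zero.mpr (by exact_mod_cast h.ne')
    simp only [h, if_pos, if_neg h.ne]
    field_simp
  · simp [h]
  · have hne : (n : ℂ) - m ≠ 0 := sub_ne_zero.mpr (by exact_mod_cast h.ne')
    simp only [if_neg (by omega : ¬ n < m), if_pos h, if_neg h.ne']
    field_simp
    ring

/-- On the dense subspace `D = {x ∈ l²(ℂ) : finitely many xₙ ≠ 0 and Σ xₙ = 0}`,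
the operators `Q` and `P` satisfy `(QP − PQ)x = i·x`. -/
theorem ccr_on_D (x : ℕ → ℂ) (hfin : {n | x n ≠ 0}.Finite)
    (hsum : ∑' n, x n = 0) (m : ℕ) :
    Qop (Pop x) m - Pop (Qop x) m = Complex.I * x m := by
  classical
  set s := hfin.toFinset with hs
  have hxs : ∀ n ∉ s, x n = 0 := by
    intro n hn
    simpa [hs, Set.Finite.mem_toFinset] using hn
  have hsum' : ∑ n ∈ s, x n = 0 := by
    rw [← hsum]
    exact (tsum_eq_sum (fun n hn => hxs n hn)).symm
  have hP1 : Pop x m = ∑ n ∈ s, (-Complex.I * aEnt m n) * x n :=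
    tsum_eq_sum (fun n hn => by rw [hxs n hn, mul_zero])
  have hP2 : Pop (Qop x) m = ∑ n ∈ s, (-Complex.I * aEnt m n) * (((n : ℂ) + 1) * x n) :=
    tsum_eq_sum (fun n hn => by unfold Qop; rw [hxs n hn]; ring)
  have hxm : (if m ∈ s then x m else 0) = x m := by
    by_cases hm : m ∈ s
    · simp [hm]
    · simp [hm, hxs m hm]
  show ((m : ℂ) + 1) * Pop x m - Pop (Qop x) m = Complex.I * x m
  rw [hP1, hP2, Finset.mul_sum, ← Finset.sum_sub_distrib]
  have : ∀ n ∈ s,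
      ((m : ℂ) + 1) * ((-Complex.I * aEnt m n) * x n)
        - (-Complex.I * aEnt m n) * (((n : ℂ) + 1) * x n)
      = -Complex.I * ((if n = m then 0 else 1) * x n) := by
    intro n _
    rw [← aEnt_key m n]
    ring
  rw [Finset.sum_congr rfl this, ← Finset.mul_sum]
  have h2 : ∑ n ∈ s, (if n = m then (0:ℂ) else 1) * x n
      = (∑ n ∈ s, x n) - (if m ∈ s then x m else 0) := by
    rw [← Finset.sum_ite_eq' s m x, ← Finset.sum_sub_distrib]
    refine Finset.sum_congr rfl fun n _ => ?_
    by_cases h : n = m <;> simp [h]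
  rw [h2, hsum', hxm]
  ring
end
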